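/- Let ℓ, h ≥ 1 and d ≥ 0 be integers and α > 0 a constant. If an ℓ-coloured graph G contains an (α, d+1)-fern of height at least h, then G contains an (α, h, d)-junior caterpillar. -/

import Mathlib

open Finset

def Anti {V : Type} (G : SimpleGraph V) (A B : Finset V) : Prop :=
  ∀ a ∈ A, ∀ b ∈ B, ¬ G.Adj a b

def FullAdj {V : Type} (G : SimpleGraph V) (A B : Finset V) : Prop :=
  ∀ a ∈ A, ∀ b ∈ B, G.Adj a b

def ConnOn {V : Type} (G : SimpleGraph V) (A : Finset V) : Prop :=
  (G.induce (A : Set V)).Connected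

def Nbr {V : Type} [Fintype V] [DecidableEq V] (G : SimpleGraph V) [DecidableRel G.Adj]
    (A : Finset V) : Finset V :=
  Finset.univ.filter (fun v => ∃ a ∈ A, G.Adj v a)

def IsIndPath {V : Type} (G : SimpleGraph V) {h : ℕ} (f : Fin h → V) : Prop :=
  Function.Injective f ∧
    ∀ i j : Fin h, G.Adj (f i) (f j) ↔ (i.val + 1 = j.val ∨ j.val + 1 = i.val)

def colClass {V : Type} [Fintype V] [DecidableEq V] {ℓ : ℕ} (col : V → Fin ℓ) (i : Fin ℓ) :
    Finset V :=
  Finset.univ.filter (fun v => col v = i)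

def IsBud {V : Type} [Fintype V] [DecidableEq V] (G : SimpleGraph V) [DecidableRel G.Adj]
    {ℓ : ℕ} (col : V → Fin ℓ) (α : ℝ) (B : Finset V) : Prop :=
  ConnOn G B ∧ ∃ j : Fin ℓ,
    α * ((colClass col j).card : ℝ) ≤ (((Nbr G B) ∩ colClass col j).card : ℝ)

/-- A rooted tree on node type `ι`, given by its root and parent function. -/
structure RootedTreeOn (ι : Type) where
  root : ι
  parent : ι → ι
  parent_root : parent root = root
  reach : ∀ v : ι, ∃ k : ℕ, parent^[k] v = root

/-- The children of a node. -/
def RootedTreeOn.children {ι : Type} [Fintype ι] [DecidableEq ι] (T : RootedTreeOn ι)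
    (t : ι) : Finset ι :=
  Finset.univ.filter (fun c => c ≠ T.root ∧ T.parent c = t)

/-- The depth of a node: its distance to the root. -/
def RootedTreeOn.depth {ι : Type} [DecidableEq ι] (T : RootedTreeOn ι) (v : ι) : ℕ :=
  Nat.find (T.reach v)

/-- The height of a rooted tree: the maximum depth of a node. -/
def RootedTreeOn.height {ι : Type} [Fintype ι] [DecidableEq ι] (T : RootedTreeOn ι) : ℕ :=
  Finset.univ.sup (fun v => T.depth v)

/-- An `(α, d')`-fern in the `ℓ`-coloured graph `G`: a rooted tree `T` in which every
internal node has exactly `d'` children, together with a colour-compatible family `B` of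
`α`-buds, one per node, pairwise anti-adjacent except that every vertex of a parent bud
has a neighbour in each child bud. -/
def IsFern {V ι : Type} [Fintype V] [DecidableEq V] [Fintype ι] [DecidableEq ι]
    (G : SimpleGraph V) [DecidableRel G.Adj] {ℓ : ℕ} (col : V → Fin ℓ) (α : ℝ)
    (d' : ℕ) (T : RootedTreeOn ι) (B : ι → Finset V) : Prop :=
  (∀ t : ι, (T.children t).Nonempty → (T.children t).card = d') ∧
  (∀ t : ι, IsBud G col α (B t)) ∧
  (∃ c : ι → Fin ℓ, Function.Injective c ∧ ∀ t : ι, B t ⊆ colClass col (c t)) ∧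
  (∀ s t : ι, s ≠ t → T.parent t ≠ s → T.parent s ≠ t → Anti G (B s) (B t)) ∧
  (∀ t : ι, t ≠ T.root → ∀ v ∈ B (T.parent t), ∃ w ∈ B t, G.Adj v w)

/-- An `(α, h, d)`-junior caterpillar in the `ℓ`-coloured graph `G`: an induced path
`P` on `h` vertices together with a colour-compatible (jointly with the path vertices)
family of pairwise anti-adjacent `α`-buds `B i j` with `N(B i j) ∩ V(P) = {P i}`. -/
def IsJuniorCat {V : Type} [Fintype V] [DecidableEq V] (G : SimpleGraph V)
    [DecidableRel G.Adj] {ℓ : ℕ} (col : V → Fin ℓ) (α : ℝ) (h d : ℕ)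
    (P : Fin h → V) (B : Fin h → Fin d → Finset V) : Prop :=
  IsIndPath G P ∧
  (∀ (i : Fin h) (j : Fin d), IsBud G col α (B i j)) ∧
  (∀ p q : Fin h × Fin d, p ≠ q → Anti G (B p.1 p.2) (B q.1 q.2)) ∧
  (∃ c : (Fin h ⊕ Fin h × Fin d) → Fin ℓ, Function.Injective c ∧
    (∀ i : Fin h, P i ∈ colClass col (c (Sum.inl i))) ∧
    (∀ (i : Fin h) (j : Fin d), B i j ⊆ colClass col (c (Sum.inr (i, j))))) ∧
  (∀ (i : Fin h) (j : Fin d),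
    Nbr G (B i j) ∩ Finset.image P Finset.univ = {P i})

/-! The spine of the caterpillar is the path from the root to a node `u` of depth `h` in the
fern's tree, and the legs at its `i`-th node are the `d` children of that node off the spine.
Choosing, from the root downwards, a neighbour of the previous vertex in each spine bud gives an
induced path, since buds of nodes at depth distance at least two are anti-adjacent; the leg buds
see the path only through their parent's vertex. -/

lemma exists_chain {α : Type*} {R : α → α → Prop} {S : ℕ → Set α} {n : ℕ} (h0 : (S 0).Nonempty)
    (hstep : ∀ k < n, ∀ x ∈ S k, ∃ y ∈ S (k + 1), R x y) :
    ∃ X : ℕ → α, (∀ k ≤ n, X k ∈ S k) ∧ ∀ k < n, R (X k) (X (k + 1)) := by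
  induction n with
  | zero =>
    obtain ⟨x, hx⟩ := h0
    refine ⟨fun _ => x, fun k hk => ?_, fun k hk => absurd hk (Nat.not_lt_zero k)⟩
    obtain rfl : k = 0 := Nat.le_zero.mp hk
    exact hx
  | succ n ih =>
    obtain ⟨X, hXS, hXR⟩ := ih fun k hk => hstep k (by omega)
    obtain ⟨y, hyS, hyR⟩ := hstep n (by omega) (X n) (hXS n le_rfl)
    refine ⟨fun k => if k ≤ n then X k else y, fun k hk => ?_, fun k hk => ?_⟩
    · dsimp only
      split_ifs with hkn
      · exact hXS k hkn
      · obtain rfl : k = n + 1 := by omega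
        exact hyS
    · rcases Nat.lt_or_eq_of_le (Nat.lt_succ_iff.mp hk) with hkn | rfl
      · simpa [hkn.le, Nat.succ_le_of_lt hkn] using hXR k hkn
      · simpa using hyR

namespace RootedTreeOn

variable {ι : Type} [DecidableEq ι] (T : RootedTreeOn ι)

@[simp]
lemma mem_children [Fintype ι] {t c : ι} : c ∈ T.children t ↔ c ≠ T.root ∧ T.parent c = t := by
  simp [children]

lemma iterate_depth (v : ι) : T.parent^[T.depth v] v = T.root :=
  Nat.find_spec (T.reach v)

lemma depth_le_of_iterate_eq_root {v : ι} {k : ℕ} (hk : T.parent^[k] v = T.root) :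
    T.depth v ≤ k :=
  Nat.find_le hk

lemma depth_iterate {v : ι} {j : ℕ} (hj : j ≤ T.depth v) :
    T.depth (T.parent^[j] v) = T.depth v - j := by
  apply le_antisymm
  · apply T.depth_le_of_iterate_eq_root
    rw [← Function.iterate_add_apply, Nat.sub_add_cancel hj, T.iterate_depth]
  · have := T.depth_le_of_iterate_eq_root (k := T.depth (T.parent^[j] v) + j)
      (by rw [Function.iterate_add_apply, T.iterate_depth])
    omega

lemma depth_eq_zero_iff {v : ι} : T.depth v = 0 ↔ v = T.root := by
  simp [depth, Nat.find_eq_zero]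

lemma depth_eq_depth_parent_add_one {v : ι} (hv : v ≠ T.root) :
    T.depth v = T.depth (T.parent v) + 1 := by
  have hpos : T.depth v ≠ 0 := mt T.depth_eq_zero_iff.mp hv
  have := T.depth_iterate (v := v) (j := 1) (by omega)
  rw [Function.iterate_one] at this
  omega

lemma depth_eq_add_one_of_parent_eq {s t : ι} (hts : t ≠ s) (h : T.parent t = s) :
    T.depth t = T.depth s + 1 := by
  have ht : t ≠ T.root := fun ht => hts (by rw [← h, ht, T.parent_root])
  rw [← h]
  exact T.depth_eq_depth_parent_add_one ht

lemma depth_of_mem_children [Fintype ι] {t c : ι} (hc : c ∈ T.children t) :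
    T.depth c = T.depth t + 1 := by
  rw [mem_children] at hc
  rw [← hc.2]
  exact T.depth_eq_depth_parent_add_one hc.1

/-- The ancestor of `u` at depth `k` (meaningful for `k ≤ T.depth u`). -/
def ancestor (u : ι) (k : ℕ) : ι :=
  T.parent^[T.depth u - k] u

lemma depth_ancestor {u : ι} {k : ℕ} (hk : k ≤ T.depth u) : T.depth (T.ancestor u k) = k := by
  rw [ancestor, T.depth_iterate (Nat.sub_le _ _)]
  omega

lemma ancestor_succ_mem_children [Fintype ι] {u : ι} {k : ℕ} (hk : k < T.depth u) :
    T.ancestor u (k + 1) ∈ T.children (T.ancestor u k) := by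
  refine T.mem_children.mpr ⟨fun hroot => ?_, ?_⟩
  · have := T.depth_ancestor hk
    rw [hroot, T.depth_eq_zero_iff.mpr rfl] at this
    omega
  · rw [ancestor, ancestor, show T.depth u - k = T.depth u - (k + 1) + 1 by omega,
      Function.iterate_succ_apply']

lemma exists_depth_eq [Fintype ι] {h : ℕ} (hh : h ≤ T.height) : ∃ u, T.depth u = h := by
  obtain ⟨v, -, hv⟩ := exists_mem_eq_sup univ ⟨T.root, mem_univ _⟩ T.depth
  exact ⟨T.ancestor v h, T.depth_ancestor (hv ▸ hh)⟩

/-- The nodes of a junior caterpillar inside the tree: the spine `a 0 = root, …, a h` descends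
one level at a time, and the legs `c i ·` are `d` distinct children of `a i` other than
`a (i + 1)`. -/
structure IsCaterpillar [Fintype ι] (h d : ℕ) (a : ℕ → ι) (c : Fin h → Fin d → ι) : Prop where
  depth_spine : ∀ k ≤ h, T.depth (a k) = k
  spine_succ_mem_children : ∀ k < h, a (k + 1) ∈ T.children (a k)
  leg_mem_children : ∀ (i : Fin h) (j : Fin d), c i j ∈ T.children (a i)
  leg_ne_spine_succ : ∀ (i : Fin h) (j : Fin d), c i j ≠ a (i + 1)
  leg_injective : ∀ i, Function.Injective (c i)

lemma exists_isCaterpillar [Fintype ι] {h d : ℕ}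
    (hdeg : ∀ t, (T.children t).Nonempty → (T.children t).card = d + 1) (hh : h ≤ T.height) :
    ∃ a c, T.IsCaterpillar h d a c := by
  obtain ⟨u, rfl⟩ := T.exists_depth_eq hh
  have hmem : ∀ k < T.depth u, T.ancestor u (k + 1) ∈ T.children (T.ancestor u k) :=
    fun k hk => T.ancestor_succ_mem_children hk
  have hcard : ∀ i : Fin (T.depth u),
      ((T.children (T.ancestor u i)).erase (T.ancestor u (i + 1))).card = d := by
    intro i
    rw [card_erase_of_mem (hmem i i.2), hdeg _ ⟨_, hmem i i.2⟩, Nat.add_sub_cancel]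
  let e (i : Fin (T.depth u)) := ((T.children (T.ancestor u i)).erase (T.ancestor u (i + 1))).equivFinOfCardEq (hcard i)
  exact ⟨T.ancestor u, fun i j => (e i).symm j,
    { depth_spine := fun k hk => T.depth_ancestor hk
      spine_succ_mem_children := hmem
      leg_mem_children := fun i j => (mem_erase.mp ((e i).symm j).2).2
      leg_ne_spine_succ := fun i j => (mem_erase.mp ((e i).symm j).2).1
      leg_injective := fun i => Subtype.val_injective.comp (e i).symm.injective }⟩

/-- The spine and leg nodes of a caterpillar, indexed like the colours of a junior caterpillar. -/
def caterpillarNode {h d : ℕ} (a : ℕ → ι) (c : Fin h → Fin d → ι) : Fin h ⊕ Fin h × Fin d → ι :=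
  Sum.elim (fun i => a i) (fun p => c p.1 p.2)

namespace IsCaterpillar

variable {T} [Fintype ι] {h d : ℕ} {a : ℕ → ι} {c : Fin h → Fin d → ι}

lemma spine_inj (hC : T.IsCaterpillar h d a c) {k m : ℕ} (hk : k ≤ h) (hm : m ≤ h)
    (he : a k = a m) : k = m := by
  rw [← hC.depth_spine k hk, ← hC.depth_spine m hm, he]

lemma parent_spine_succ (hC : T.IsCaterpillar h d a c) {k : ℕ} (hk : k < h) :
    T.parent (a (k + 1)) = a k :=
  (T.mem_children.mp (hC.spine_succ_mem_children k hk)).2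

lemma parent_spine_ne (hC : T.IsCaterpillar h d a c) {k m : ℕ} (hk : k ≤ h) (hm : m ≤ h)
    (hkm : k ≠ m) (hsucc : k + 1 ≠ m) : T.parent (a m) ≠ a k := by
  intro he
  have := T.depth_eq_add_one_of_parent_eq (fun he' : a m = a k => hkm (hC.spine_inj hm hk he').symm) he
  rw [hC.depth_spine m hm, hC.depth_spine k hk] at this
  exact hsucc this.symm

lemma parent_leg (hC : T.IsCaterpillar h d a c) (i : Fin h) (j : Fin d) :
    T.parent (c i j) = a i :=
  (T.mem_children.mp (hC.leg_mem_children i j)).2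

lemma depth_leg (hC : T.IsCaterpillar h d a c) (i : Fin h) (j : Fin d) :
    T.depth (c i j) = i + 1 := by
  rw [T.depth_of_mem_children (hC.leg_mem_children i j), hC.depth_spine i i.2.le]

lemma leg_ne_spine (hC : T.IsCaterpillar h d a c) (i : Fin h) (j : Fin d) {k : ℕ} (hk : k ≤ h) :
    c i j ≠ a k := by
  intro he
  obtain rfl : k = i + 1 := by rw [← hC.depth_spine k hk, ← he, hC.depth_leg]
  exact hC.leg_ne_spine_succ i j he

lemma injective_caterpillarNode (hC : T.IsCaterpillar h d a c) :
    Function.Injective (caterpillarNode a c) := by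
  refine Function.Injective.sumElim (fun i i' he => Fin.ext (hC.spine_inj i.2.le i'.2.le he))
    ?_ fun i p => (hC.leg_ne_spine p.1 p.2 i.2.le).symm
  rintro ⟨i, j⟩ ⟨i', j'⟩ he
  obtain rfl : i = i' := Fin.ext (by simpa [hC.depth_leg] using congrArg T.depth he)
  exact Prod.ext rfl (hC.leg_injective i he)

end IsCaterpillar

end RootedTreeOn

open RootedTreeOn

section Fern

variable {V ι : Type} [Fintype V] [DecidableEq V] [Fintype ι] [DecidableEq ι]
  {G : SimpleGraph V} [DecidableRel G.Adj] {ℓ : ℕ} {col : V → Fin ℓ} {α : ℝ} {d' : ℕ}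
  {T : RootedTreeOn ι} {B : ι → Finset V} {h d : ℕ} {a : ℕ → ι} {c : Fin h → Fin d → ι}

lemma IsBud.nonempty {A : Finset V} (hA : IsBud G col α A) : A.Nonempty := by
  obtain ⟨⟨x, hx⟩⟩ := hA.1.nonempty
  exact ⟨x, hx⟩

lemma IsFern.disjoint (hF : IsFern G col α d' T B) {s t : ι} (hst : s ≠ t) :
    Disjoint (B s) (B t) := by
  obtain ⟨-, -, ⟨cF, hcF, hsub⟩, -, -⟩ := hF
  refine disjoint_left.mpr fun w hs ht => hst (hcF ?_)
  have hs' := hsub s hs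
  have ht' := hsub t ht
  simp only [colClass, mem_filter, mem_univ, true_and] at hs' ht'
  exact hs'.symm.trans ht'

lemma IsFern.exists_adj_of_mem_children (hF : IsFern G col α d' T B) {s t : ι}
    (ht : t ∈ T.children s) {v : V} (hv : v ∈ B s) : ∃ w ∈ B t, G.Adj v w := by
  rw [mem_children] at ht
  exact hF.2.2.2.2 t ht.1 v (ht.2 ▸ hv)

lemma IsFern.anti_spine_spine (hF : IsFern G col α d' T B) (hC : T.IsCaterpillar h d a c)
    {k m : ℕ} (hk : k ≤ h) (hm : m ≤ h) (hkm : k ≠ m) (hk1 : k + 1 ≠ m) (hm1 : m + 1 ≠ k) :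
    Anti G (B (a k)) (B (a m)) :=
  hF.2.2.2.1 _ _ (fun he => hkm (hC.spine_inj hk hm he)) (hC.parent_spine_ne hk hm hkm hk1)
    (hC.parent_spine_ne hm hk hkm.symm hm1)

lemma IsFern.anti_spine_leg (hF : IsFern G col α d' T B) (hC : T.IsCaterpillar h d a c)
    {k : ℕ} (hk : k ≤ h) (i : Fin h) (j : Fin d) (hki : k ≠ i) :
    Anti G (B (a k)) (B (c i j)) := by
  refine hF.2.2.2.1 _ _ (hC.leg_ne_spine i j hk).symm ?_ fun he => ?_
  · rw [hC.parent_leg]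
    exact fun he => hki (hC.spine_inj i.2.le hk he).symm
  · have hd := T.depth_eq_add_one_of_parent_eq (hC.leg_ne_spine i j hk).symm he
    rw [hC.depth_spine k hk, hC.depth_leg] at hd
    subst hd
    rw [hC.parent_spine_succ (by omega)] at he
    exact hC.leg_ne_spine_succ i j he.symm

lemma IsFern.anti_leg_leg (hF : IsFern G col α d' T B) (hC : T.IsCaterpillar h d a c)
    {p q : Fin h × Fin d} (hpq : p ≠ q) : Anti G (B (c p.1 p.2)) (B (c q.1 q.2)) := by
  refine hF.2.2.2.1 _ _ (fun he => hpq (Sum.inr_injective (hC.injective_caterpillarNode he)))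
    ?_ ?_
  · rw [hC.parent_leg]
    exact (hC.leg_ne_spine _ _ q.1.2.le).symm
  · rw [hC.parent_leg]
    exact (hC.leg_ne_spine _ _ p.1.2.le).symm

variable {X : ℕ → V}

lemma IsFern.isIndPath_spine (hF : IsFern G col α d' T B) (hC : T.IsCaterpillar h d a c)
    (hXB : ∀ k ≤ h, X k ∈ B (a k)) (hXadj : ∀ k < h, G.Adj (X k) (X (k + 1))) :
    IsIndPath G (fun i : Fin h => X i) := by
  refine ⟨fun i i' he => ?_, fun i i' => ⟨fun hadj => ?_, ?_⟩⟩
  · by_contra hne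
    have hne' : a i ≠ a i' := fun he' => hne (Fin.ext (hC.spine_inj i.2.le i'.2.le he'))
    have he : X i = X i' := he
    exact disjoint_left.mp (hF.disjoint hne') (hXB i i.2.le) (he ▸ hXB i' i'.2.le)
  · by_contra hcon
    rw [not_or] at hcon
    have hii' : (i : ℕ) ≠ i' := fun he => by simp [he] at hadj
    exact hF.anti_spine_spine hC i.2.le i'.2.le hii' hcon.1 hcon.2 _ (hXB i i.2.le) _
      (hXB i' i'.2.le) hadj
  · rintro (hsucc | hsucc)
    · simpa [← hsucc] using hXadj i (by omega)
    · simpa [← hsucc] using (hXadj i' (by omega)).symm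

lemma IsFern.nbr_leg_inter_spine (hF : IsFern G col α d' T B) (hC : T.IsCaterpillar h d a c)
    (hXB : ∀ k ≤ h, X k ∈ B (a k)) (i : Fin h) (j : Fin d) :
    Nbr G (B (c i j)) ∩ image (fun k : Fin h => X k) univ = {X i} := by
  ext w
  simp only [Nbr, mem_inter, mem_filter, mem_univ, true_and, mem_image, mem_singleton]
  constructor
  · rintro ⟨⟨b, hb, hadj⟩, k, rfl⟩
    by_contra hne
    exact hF.anti_spine_leg hC k.2.le i j (fun hki => hne (by rw [Fin.ext hki])) _
      (hXB k k.2.le) _ hb hadj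
  · rintro rfl
    obtain ⟨b, hb, hadj⟩ := hF.exists_adj_of_mem_children (hC.leg_mem_children i j) (hXB i i.2.le)
    exact ⟨⟨b, hb, hadj⟩, i, rfl⟩

lemma IsFern.exists_isJuniorCat (hF : IsFern G col α d' T B) (hC : T.IsCaterpillar h d a c) :
    ∃ (P : Fin h → V) (B' : Fin h → Fin d → Finset V), IsJuniorCat G col α h d P B' := by
  obtain ⟨X, hXB, hXadj⟩ := exists_chain (R := G.Adj) (S := fun k => (B (a k) : Set V))
    (hF.2.1 _).nonempty fun k hk x hx =>
      hF.exists_adj_of_mem_children (hC.spine_succ_mem_children k hk) hx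
  obtain ⟨cF, hcF, hsub⟩ := hF.2.2.1
  exact ⟨_, _, hF.isIndPath_spine hC hXB hXadj, fun i j => hF.2.1 _,
    fun p q hpq => hF.anti_leg_leg hC hpq,
    ⟨cF ∘ caterpillarNode a c, hcF.comp hC.injective_caterpillarNode,
      fun i => hsub _ (hXB i i.2.le), fun i j => hsub _⟩,
    hF.nbr_leg_inter_spine hC hXB⟩

end Fern

theorem stmt4_general {V ι : Type} [Fintype V] [DecidableEq V] [Fintype ι] [DecidableEq ι]
    (G : SimpleGraph V) [DecidableRel G.Adj] {ℓ : ℕ} (col : V → Fin ℓ)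
    (α : ℝ) (h d : ℕ)
    (T : RootedTreeOn ι) (B : ι → Finset V)
    (hfern : IsFern G col α (d + 1) T B) (hheight : h ≤ T.height) :
    ∃ (P : Fin h → V) (B' : Fin h → Fin d → Finset V),
      IsJuniorCat G col α h d P B' := by
  obtain ⟨a, c, hC⟩ := T.exists_isCaterpillar hfern.1 hheight
  exact hfern.exists_isJuniorCat hC

/-- if an `ℓ`-coloured graph contains an `(α, d+1)`-fern of height at
least `h`, then it contains an `(α, h, d)`-junior caterpillar. -/
theorem stmt4 {V ι : Type} [Fintype V] [DecidableEq V] [Fintype ι] [DecidableEq ι]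
    (G : SimpleGraph V) [DecidableRel G.Adj] {ℓ : ℕ} (col : V → Fin ℓ)
    (α : ℝ) (hα : 0 < α) (h d : ℕ) (hh : 1 ≤ h) (hℓ : 1 ≤ ℓ)
    (T : RootedTreeOn ι) (B : ι → Finset V)
    (hfern : IsFern G col α (d + 1) T B) (hheight : h ≤ T.height) :
    ∃ (P : Fin h → V) (B' : Fin h → Fin d → Finset V),
      IsJuniorCat G col α h d P B' :=
  stmt4_general G col α h d T B hfern hheight
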